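/- arXiv:2410.13152 — 2 statements merged into one kernel-verified Lean document; each statement's English description precedes it below -/
import Mathlib

section
/- The number of labelled (unrooted) trees on vertex set {1,...,n} is n^{n-2}. -/
/-!
Joyal's proof. A tree on `α` with a chosen root `r` is the same as its parent function, a map
`α → α` that fixes `r` and whose iterates carry every vertex to `r`. Marking a second vertex `a`
gives a *vertebrate*, and there are `n ^ 2 · #trees` of them. Every self-map of `α`, and every
vertebrate, splits into a set `C ⊆ α`, a structure on `C`, and a forest with root set `C` (a map
fixing `C` whose orbits all enter `C`): for a self-map, `C` is the set of periodic points and the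
structure is the permutation induced on `C`; for a vertebrate, `C` is the path from `a` to `r`
and the structure is the order along that path. As a finite set has as many permutations as
linear orders, there are as many vertebrates as self-maps, namely `n ^ n`.
-/

open Function Set

variable {α : Type*}

namespace Function

variable {f g : α → α} {C : Set α} {a x : α} {i j k : ℕ}

theorem isPeriodicPt_iterate_of_iterate_eq (hij : i < j) (h : f^[i] a = f^[j] a) :
    IsPeriodicPt f (j - i) (f^[i] a) := by
  show f^[j - i] (f^[i] a) = f^[i] a
  rw [← iterate_add_apply, Nat.sub_add_cancel hij.le, h]

theorem exists_iterate_mem_periodicPts [Finite α] (f : α → α) (x : α) :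
    ∃ k, f^[k] x ∈ periodicPts f := by
  obtain ⟨i, j, hij, hne⟩ : ∃ i j, f^[i] x = f^[j] x ∧ i ≠ j := by
    simpa [Injective] using not_injective_infinite_finite (f^[·] x)
  wlog hlt : i < j generalizing i j
  · exact this j i hij.symm hne.symm (by omega)
  exact ⟨i, mk_mem_periodicPts (by omega) (isPeriodicPt_iterate_of_iterate_eq hlt hij)⟩

theorem mem_of_mem_periodicPts_of_iterate_mem (hC : MapsTo f C C) (hx : x ∈ periodicPts f)
    (hk : f^[k] x ∈ C) : x ∈ C := by
  obtain ⟨n, hn, hper⟩ := mem_periodicPts.1 hx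
  rw [← (hper.mul_const k).eq, ← Nat.sub_add_cancel (Nat.le_mul_of_pos_left k hn),
    iterate_add_apply]
  exact hC.iterate _ hk

theorem exists_iterate_mem_of_eqOn_compl (hfg : EqOn f g Cᶜ) (hk : f^[k] x ∈ C) :
    ∃ j, g^[j] x ∈ C := by
  induction k generalizing x with
  | zero => exact ⟨0, hk⟩
  | succ k ih =>
    by_cases hx : x ∈ C
    · exact ⟨0, hx⟩
    · rw [iterate_succ_apply, hfg hx] at hk
      obtain ⟨j, hj⟩ := ih hk
      exact ⟨j + 1, hj⟩

theorem range_iterate_subset_image_Iio (hij : i < j) (h : f^[i] a = f^[j] a) :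
    range (f^[·] a) ⊆ (f^[·] a) '' Iio j := by
  rintro _ ⟨k, rfl⟩
  rcases lt_or_ge k i with hk | hk
  · exact ⟨k, by simp only [mem_Iio]; omega, rfl⟩
  refine ⟨(k - i) % (j - i) + i, ?_, ?_⟩
  · have := Nat.mod_lt (k - i) (Nat.sub_pos_of_lt hij)
    simp only [mem_Iio]
    omega
  · simp only [iterate_add_apply, (isPeriodicPt_iterate_of_iterate_eq hij h).iterate_mod_apply]
    rw [← iterate_add_apply, Nat.sub_add_cancel hk]

theorem card_range_iterate_le (hij : i < j) (h : f^[i] a = f^[j] a) :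
    Nat.card (range (f^[·] a)) ≤ j :=
  calc Nat.card (range (f^[·] a))
      ≤ Nat.card ((f^[·] a) '' Iio j) :=
        Nat.card_mono ((finite_Iio j).image _) (range_iterate_subset_image_Iio hij h)
    _ ≤ Nat.card (Iio j) := Nat.card_image_le (finite_Iio j)
    _ = j := by simp

theorem injective_iterate_fin_card_range :
    Injective fun i : Fin (Nat.card (range (f^[·] a))) => f^[i] a := by
  intro i j hij
  by_contra hne
  wlog hlt : (i : ℕ) < j generalizing i j
  · exact this hij.symm (Ne.symm hne) (by omega)
  exact absurd (card_range_iterate_le hlt hij) (by omega)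

noncomputable def iterateEquiv [Finite α] (hC : range (f^[·] a) = C) : Fin (Nat.card C) ≃ C :=
  Equiv.ofBijective (fun i => ⟨f^[i] a, hC ▸ mem_range_self (i : ℕ)⟩) <| by
    subst hC
    exact Injective.bijective_of_nat_card_le
      (fun i j hij => injective_iterate_fin_card_range (congrArg Subtype.val hij)) (by simp)

@[simp]
theorem coe_iterateEquiv [Finite α] (hC : range (f^[·] a) = C) (i : Fin (Nat.card C)) :
    (iterateEquiv hC i : α) = f^[i] a :=
  rfl

end Function

/-- The parent function of a forest on `α` whose set of roots is `C`. -/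
structure IsRootedForest (h : α → α) (C : Set α) : Prop where
  apply_eq_self : ∀ x ∈ C, h x = x
  exists_iterate_mem : ∀ x, ∃ k, h^[k] x ∈ C

namespace IsRootedForest

variable {f h : α → α} {C : Set α} {r x : α}

theorem mapsTo (hh : IsRootedForest h C) : MapsTo h C C :=
  fun x hx => (hh.apply_eq_self x hx).symm ▸ hx

theorem mem_of_mem_periodicPts (hh : IsRootedForest h C) (hx : x ∈ periodicPts h) : x ∈ C :=
  have ⟨_, hk⟩ := hh.exists_iterate_mem x
  mem_of_mem_periodicPts_of_iterate_mem hh.mapsTo hx hk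

theorem nonempty [Nonempty α] (hh : IsRootedForest h C) : C.Nonempty :=
  have ⟨_, hk⟩ := hh.exists_iterate_mem (Classical.arbitrary α)
  ⟨_, hk⟩

theorem eq_of_isPeriodicPt (hf : IsRootedForest f {r}) {n : ℕ} (hn : 0 < n)
    (hx : IsPeriodicPt f n x) : x = r :=
  hf.mem_of_mem_periodicPts (mk_mem_periodicPts hn hx)

theorem apply_ne_self (hf : IsRootedForest f {r}) (hx : x ≠ r) : f x ≠ x :=
  fun hfx => hx (hf.eq_of_isPeriodicPt one_pos hfx)

theorem iterate_card_sub_one_eq [Finite α] {a : α} (hf : IsRootedForest f {r})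
    (hC : range (f^[·] a) = C) : f^[Nat.card C - 1] a = r := by
  obtain ⟨i, hi⟩ := (iterateEquiv hC).surjective ⟨f^[Nat.card C] a, hC ▸ mem_range_self _⟩
  have hi : f^[i] a = f^[Nat.card C] a := congrArg Subtype.val hi
  have hroot : f^[i] a = r := hf.eq_of_isPeriodicPt (by omega)
    (isPeriodicPt_iterate_of_iterate_eq i.isLt hi)
  rw [← Nat.sub_add_cancel (show (i : ℕ) ≤ Nat.card C - 1 by omega), iterate_add_apply, hroot,
    iterate_fixed (hf.apply_eq_self r rfl)]

end IsRootedForest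

theorem isRootedForest_piecewise_id {C : Set α} [DecidablePred (· ∈ C)] {f : α → α}
    (hf : ∀ x, ∃ k, f^[k] x ∈ C) : IsRootedForest (C.piecewise id f) C where
  apply_eq_self _ hx := piecewise_eq_of_mem _ _ _ hx
  exists_iterate_mem x :=
    have ⟨_, hk⟩ := hf x
    exists_iterate_mem_of_eqOn_compl (fun _ hy => (piecewise_eq_of_notMem _ _ _ hy).symm) hk

section PeriodicPts

open scoped Classical

variable [Finite α]

theorem periodicPts_piecewise_ofSubtype {C : Set α} (σ : Equiv.Perm C) {h : α → α}
    (hh : IsRootedForest h C) : periodicPts (C.piecewise (Equiv.Perm.ofSubtype σ) h) = C := by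
  set g := C.piecewise (Equiv.Perm.ofSubtype σ) h
  have hσ : ∀ y : C, g y = σ y := fun y => by
    simp only [g, piecewise_eq_of_mem _ _ _ y.2, Equiv.Perm.ofSubtype_apply_coe]
  refine Subset.antisymm (fun x hx => ?_) (fun x hx => ?_)
  · have hgC : MapsTo g C C := fun y hy => hσ ⟨y, hy⟩ ▸ (σ ⟨y, hy⟩).2
    obtain ⟨_, hk⟩ := hh.exists_iterate_mem x
    obtain ⟨_, hj⟩ := exists_iterate_mem_of_eqOn_compl
      (fun _ hy => (piecewise_eq_of_notMem _ _ _ hy).symm) hk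
    exact mem_of_mem_periodicPts_of_iterate_mem hgC hx hj
  · have hsemi : Semiconj Subtype.val σ g := fun y => (hσ y).symm
    exact hsemi.mapsTo_periodicPts (σ.injective.mem_periodicPts ⟨x, hx⟩)

noncomputable def periodicPtsFiberEquiv (C : Set α) :
    {f : α → α // periodicPts f = C} ≃
      Equiv.Perm C × {h : α → α // IsRootedForest h C} where
  toFun f := (BijOn.equiv f.1 (by simpa only [f.2] using bijOn_periodicPts f.1),
    ⟨C.piecewise id f.1, isRootedForest_piecewise_id fun x => by
      simpa only [f.2] using exists_iterate_mem_periodicPts f.1 x⟩)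
  invFun p :=
    ⟨C.piecewise (Equiv.Perm.ofSubtype p.1) p.2.1, periodicPts_piecewise_ofSubtype p.1 p.2.2⟩
  left_inv f := by
    ext x
    by_cases hx : x ∈ C <;> simp [hx, BijOn.equiv, Equiv.Perm.ofSubtype_apply_of_mem]
  right_inv p := by
    refine Prod.ext (Equiv.ext fun y => Subtype.ext ?_) (Subtype.ext (funext fun x => ?_))
    · simp [BijOn.equiv]
    · by_cases hx : x ∈ C
      · simp [hx, p.2.2.apply_eq_self x hx]
      · simp [hx]

end PeriodicPts

section Chain

variable {C : Set α} {m : ℕ} (e : Fin m ≃ C) (h : α → α)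

/-- Walks along `C` in the order given by `e`, stopping at its last point, and follows `h` off
`C`. -/
noncomputable def chainFun (x : α) : α :=
  open scoped Classical in
  if hx : x ∈ C then
    e ⟨min (e.symm ⟨x, hx⟩ + 1) (m - 1), by have := (e.symm ⟨x, hx⟩).isLt; omega⟩
  else h x

theorem chainFun_of_notMem {x : α} (hx : x ∉ C) : chainFun e h x = h x := dif_neg hx

theorem chainFun_eqOn_compl : EqOn (chainFun e h) h Cᶜ := fun _ => chainFun_of_notMem e h

theorem chainFun_apply_coe (i : Fin m) :
    chainFun e h (e i) = e ⟨min (i + 1) (m - 1), by omega⟩ := by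
  simp [chainFun]

theorem chainFun_iterate_apply_coe (i : Fin m) (j : ℕ) :
    (chainFun e h)^[j] (e i) = e ⟨min (i + j) (m - 1), by omega⟩ := by
  induction j generalizing i with
  | zero => simp [show min (i : ℕ) (m - 1) = i by omega]
  | succ j ih =>
    rw [iterate_succ_apply, chainFun_apply_coe, ih]
    congr 3
    simp only
    omega

theorem isRootedForest_chainFun (hh : IsRootedForest h C) (hm : 0 < m) :
    IsRootedForest (chainFun e h) {(e ⟨m - 1, by omega⟩ : α)} where
  apply_eq_self _ hx := by
    rw [mem_singleton_iff.1 hx, chainFun_apply_coe]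
    congr 2
    ext
    simp only
    omega
  exists_iterate_mem x := by
    obtain ⟨_, hk⟩ := hh.exists_iterate_mem x
    obtain ⟨j, hj⟩ := exists_iterate_mem_of_eqOn_compl (chainFun_eqOn_compl e h).symm hk
    obtain ⟨i, hi⟩ := e.surjective ⟨_, hj⟩
    have hi : (e i : α) = (chainFun e h)^[j] x := by rw [hi]
    refine ⟨m - 1 + j, ?_⟩
    rw [iterate_add_apply, ← hi, chainFun_iterate_apply_coe, mem_singleton_iff]
    congr 2
    ext
    simp only
    omega

theorem range_iterate_chainFun (hm : 0 < m) :
    range ((chainFun e h)^[·] (e ⟨0, hm⟩)) = C := by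
  refine Subset.antisymm ?_ fun x hx => ⟨e.symm ⟨x, hx⟩, ?_⟩
  · rintro _ ⟨j, rfl⟩
    simp only [chainFun_iterate_apply_coe, Subtype.coe_prop]
  · simp only [chainFun_iterate_apply_coe]
    rw [show (⟨min (0 + (e.symm ⟨x, hx⟩ : ℕ)) (m - 1), _⟩ : Fin m) = e.symm ⟨x, hx⟩ by
      ext; simp only [zero_add]; omega]
    simp

theorem piecewise_id_chainFun [DecidablePred (· ∈ C)] (hh : IsRootedForest h C) :
    C.piecewise id (chainFun e h) = h := by
  ext x
  by_cases hx : x ∈ C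
  · rw [piecewise_eq_of_mem _ _ _ hx, id, hh.apply_eq_self x hx]
  · rw [piecewise_eq_of_notMem _ _ _ hx, chainFun_of_notMem e h hx]

end Chain

theorem iterateEquiv_range_iterate_chainFun [Finite α] {C : Set α} (e : Fin (Nat.card C) ≃ C)
    (h : α → α) (hm : 0 < Nat.card C) : iterateEquiv (range_iterate_chainFun e h hm) = e := by
  ext i
  simp only [coe_iterateEquiv, chainFun_iterate_apply_coe, zero_add]
  congr 2
  ext
  simp only
  omega

theorem chainFun_iterateEquiv [Finite α] {C : Set α} [DecidablePred (· ∈ C)] {f : α → α}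
    {r a : α} (hf : IsRootedForest f {r}) (hC : range (f^[·] a) = C) :
    chainFun (iterateEquiv hC) (C.piecewise id f) = f := by
  ext x
  by_cases hx : x ∈ C
  · obtain ⟨i, rfl⟩ : ∃ i, (iterateEquiv hC i : α) = x :=
      ⟨_, congrArg Subtype.val ((iterateEquiv hC).apply_symm_apply ⟨x, hx⟩)⟩
    rw [chainFun_apply_coe]
    simp only [coe_iterateEquiv, ← iterate_succ_apply']
    rcases lt_or_ge ((i : ℕ) + 1) (Nat.card C) with hi | hi
    · rw [min_eq_left (by omega)]
    · rw [min_eq_right (by omega), iterate_succ_apply', show (i : ℕ) = Nat.card C - 1 by omega,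
        hf.iterate_card_sub_one_eq hC, hf.apply_eq_self r rfl]
  · rw [chainFun_of_notMem _ _ hx, piecewise_eq_of_notMem _ _ _ hx]

/-- Joyal's vertebrates: trees with two marked vertices `root` and `mark`, each encoded by the
parent function of the tree rooted at `root`. -/
@[ext]
structure Vertebrate (α : Type*) where
  root : α
  parent : α → α
  mark : α
  isRootedForest : IsRootedForest parent {root}

namespace Vertebrate

/-- The path from `mark` to `root`. -/
def spine (v : Vertebrate α) : Set α := range (v.parent^[·] v.mark)

theorem exists_iterate_mem_spine (v : Vertebrate α) (x : α) :
    ∃ k, v.parent^[k] x ∈ v.spine := by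
  obtain ⟨k, hk⟩ := v.isRootedForest.exists_iterate_mem x
  obtain ⟨j, hj⟩ := v.isRootedForest.exists_iterate_mem v.mark
  exact ⟨k, mem_singleton_iff.1 hk ▸ ⟨j, mem_singleton_iff.1 hj⟩⟩

section SpineFiber

open scoped Classical

variable [Finite α] [Nonempty α]

noncomputable def spineFiberEquiv (C : Set α) :
    {v : Vertebrate α // v.spine = C} ≃
      (Fin (Nat.card C) ≃ C) × {h : α → α // IsRootedForest h C} where
  toFun v := (iterateEquiv v.2, ⟨C.piecewise id v.1.parent,
    isRootedForest_piecewise_id fun x => by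
      simpa only [v.2] using v.1.exists_iterate_mem_spine x⟩)
  invFun p :=
    have hm : 0 < Nat.card C := have := p.2.2.nonempty.coe_sort; Nat.card_pos
    ⟨⟨p.1 ⟨Nat.card C - 1, by omega⟩, chainFun p.1 p.2.1, p.1 ⟨0, hm⟩,
      isRootedForest_chainFun p.1 p.2.1 p.2.2 hm⟩, range_iterate_chainFun p.1 p.2.1 hm⟩
  left_inv := by
    rintro ⟨v, hC⟩
    exact Subtype.ext (Vertebrate.ext (v.isRootedForest.iterate_card_sub_one_eq hC)
      (chainFun_iterateEquiv v.isRootedForest hC) rfl)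
  right_inv := by
    rintro ⟨e, h, hh⟩
    exact Prod.ext (iterateEquiv_range_iterate_chainFun e h _)
      (Subtype.ext (piecewise_id_chainFun e h hh))

end SpineFiber

/-- Permutations and linear orders of a finite set are equinumerous. -/
noncomputable def equivFun [Finite α] [Nonempty α] : Vertebrate α ≃ (α → α) :=
  (Equiv.sigmaFiberEquiv spine).symm.trans <|
    (Equiv.sigmaCongrRight fun C => (spineFiberEquiv C).trans <|
      ((Equiv.equivCongr (Finite.equivFin C) (Equiv.refl C)).symm.prodCongr (Equiv.refl _)).trans
        (periodicPtsFiberEquiv C).symm).trans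
    (Equiv.sigmaFiberEquiv periodicPts)

def equivSigma : Vertebrate α ≃ Σ r : α, {f : α → α // IsRootedForest f {r}} × α where
  toFun v := ⟨v.root, ⟨v.parent, v.isRootedForest⟩, v.mark⟩
  invFun p := ⟨p.1, p.2.1.1, p.2.2, p.2.1.2⟩
  left_inv _ := rfl
  right_inv _ := rfl

end Vertebrate

namespace SimpleGraph

variable {G : SimpleGraph α} {f g : α → α} {r x : α}

def functionalGraph (f : α → α) : SimpleGraph α := fromRel (f · = ·)

@[simp]
theorem functionalGraph_adj {y : α} :
    (functionalGraph f).Adj x y ↔ x ≠ y ∧ (f x = y ∨ f y = x) :=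
  Iff.rfl

theorem reachable_iterate_functionalGraph (f : α → α) (x : α) (k : ℕ) :
    (functionalGraph f).Reachable x (f^[k] x) := by
  induction k with
  | zero => rfl
  | succ k ih =>
    rw [iterate_succ_apply']
    refine ih.trans ?_
    by_cases hx : f^[k] x = f (f^[k] x)
    · rw [← hx]
    · exact Adj.reachable ⟨hx, Or.inl rfl⟩

theorem connected_functionalGraph (hf : IsRootedForest f {r}) :
    (functionalGraph f).Connected := by
  have hreach : ∀ x, (functionalGraph f).Reachable x r := fun x =>
    have ⟨k, hk⟩ := hf.exists_iterate_mem x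
    mem_singleton_iff.1 hk ▸ reachable_iterate_functionalGraph f x k
  exact (connected_iff _).2 ⟨fun x y => (hreach x).trans (hreach y).symm, ⟨r⟩⟩

/-- Every edge is `{x, f x}` for exactly one non-root `x`. -/
theorem card_edgeSet_functionalGraph [Finite α] (hf : IsRootedForest f {r}) :
    Nat.card (functionalGraph f).edgeSet + 1 = Nat.card α := by
  classical
  have hroot := hf.apply_eq_self r rfl
  let φ : {x // x ≠ r} → (functionalGraph f).edgeSet := fun x =>
    ⟨s(x, f x), (hf.apply_ne_self x.2).symm, Or.inl rfl⟩
  have hφ : Bijective φ := by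
    refine ⟨fun x y hxy => Subtype.ext ?_, ?_⟩
    · rcases Sym2.eq_iff.1 (congrArg Subtype.val hxy) with ⟨h, -⟩ | ⟨hx, hy⟩
      · exact h
      · refine absurd (hf.eq_of_isPeriodicPt two_pos ?_) x.2
        show f (f x) = x
        rw [hy, ← hx]
    · rintro ⟨e, he⟩
      induction e using Sym2.ind with
      | h u v =>
        rw [mem_edgeSet, functionalGraph_adj] at he
        obtain ⟨huv, rfl | rfl⟩ := he
        · exact ⟨⟨u, fun hu => huv (by rw [hu, hroot])⟩, rfl⟩
        · exact ⟨⟨v, fun hv => huv (by rw [hv, hroot])⟩, Subtype.ext Sym2.eq_swap⟩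
  rw [← Nat.card_eq_of_bijective φ hφ, ← Finite.card_option,
    Nat.card_congr (Equiv.optionSubtypeNe r)]

theorem isTree_functionalGraph [Finite α] (hf : IsRootedForest f {r}) :
    (functionalGraph f).IsTree :=
  isTree_iff_connected_and_card.2
    ⟨connected_functionalGraph hf, card_edgeSet_functionalGraph hf⟩

/-- If `f y ≠ g y`, the edge `{y, g y}` must be `f`'s edge `{g y, f (g y)}`, and then
`f (g y) ≠ g (g y)` as `y` is not `g`-periodic: the disagreement would propagate along the
`g`-orbit of `y` up to the common root. -/
theorem eq_of_functionalGraph_eq (hf : IsRootedForest f {r}) (hg : IsRootedForest g {r})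
    (hfg : functionalGraph f = functionalGraph g) : f = g := by
  have step : ∀ y, f y ≠ g y → f (g y) ≠ g (g y) := by
    intro y hy
    have hyr : y ≠ r := by
      rintro rfl
      exact hy (by rw [hf.apply_eq_self y rfl, hg.apply_eq_self y rfl])
    have hadj : (functionalGraph f).Adj y (g y) :=
      hfg ▸ ⟨(hg.apply_ne_self hyr).symm, Or.inl rfl⟩
    have hgy : f (g y) = y := hadj.2.resolve_left hy
    intro hgg
    exact hyr (hg.eq_of_isPeriodicPt two_pos (show g (g y) = y by rw [← hgg, hgy]))
  funext x
  by_contra hx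
  have hne : ∀ k, f (g^[k] x) ≠ g (g^[k] x) := fun k => by
    induction k with
    | zero => exact hx
    | succ k ih => rw [iterate_succ_apply']; exact step _ ih
  obtain ⟨k, hk⟩ := hg.exists_iterate_mem x
  exact hne k (by rw [mem_singleton_iff.1 hk, hf.apply_eq_self r rfl, hg.apply_eq_self r rfl])

theorem Connected.exists_adj_dist_lt (hG : G.Connected) (hx : x ≠ r) :
    ∃ y, G.Adj x y ∧ G.dist y r < G.dist x r := by
  obtain ⟨p, hp⟩ := hG.exists_walk_length_eq_dist x r
  cases p with
  | nil => exact absurd rfl hx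
  | cons hadj q => exact ⟨_, hadj, (dist_le q).trans_lt (by simp [← hp])⟩

/-- The parent function towards `r` moves every other vertex one step closer to `r`. -/
theorem IsTree.exists_isRootedForest_functionalGraph_eq (hG : G.IsTree) (r : α) :
    ∃ f, IsRootedForest f {r} ∧ functionalGraph f = G := by
  classical
  choose! p hp using fun x (hx : x ≠ r) => hG.connected.exists_adj_dist_lt hx
  have hf : IsRootedForest (update p r r) {r} := by
    refine ⟨fun x hx => by rw [mem_singleton_iff.1 hx, update_self], fun x => ?_⟩
    induction hd : G.dist x r using Nat.strong_induction_on generalizing x with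
    | _ d ih =>
      by_cases hx : x = r
      · exact ⟨0, hx⟩
      obtain ⟨k, hk⟩ := ih _ (hd ▸ (hp x hx).2) (p x) rfl
      exact ⟨k + 1, by rwa [iterate_succ_apply, update_of_ne hx]⟩
  have hadj : ∀ x, x ≠ update p r r x → G.Adj x (update p r r x) := fun x hne => by
    by_cases hx : x = r
    · exact absurd (by rw [hx, update_self]) hne
    · rw [update_of_ne hx]; exact (hp x hx).1
  refine ⟨_, hf, (isTree_iff_minimal_connected.1 hG).eq_of_le (connected_functionalGraph hf) ?_⟩
  rintro x y ⟨hne, rfl | rfl⟩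
  · exact hadj x hne
  · exact (hadj y hne.symm).symm

noncomputable def isRootedForestEquivIsTree [Finite α] (r : α) :
    {f : α → α // IsRootedForest f {r}} ≃ {G : SimpleGraph α // G.IsTree} :=
  Equiv.ofBijective (fun f => ⟨functionalGraph f.1, isTree_functionalGraph f.2⟩)
    ⟨fun f g hfg => Subtype.ext (eq_of_functionalGraph_eq f.2 g.2 (congrArg Subtype.val hfg)),
      fun G => have ⟨f, hf, hfG⟩ := G.2.exists_isRootedForest_functionalGraph_eq r
        ⟨⟨f, hf⟩, Subtype.ext hfG⟩⟩

theorem card_isTree_mul_sq [Finite α] [Nonempty α] :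
    Nat.card {G : SimpleGraph α // G.IsTree} * Nat.card α ^ 2 = Nat.card α ^ Nat.card α := by
  rw [← Nat.card_fun, ← Nat.card_congr Vertebrate.equivFun,
    Nat.card_congr Vertebrate.equivSigma,
    Nat.card_congr (Equiv.sigmaCongrRight fun r =>
      (isRootedForestEquivIsTree r).prodCongr (Equiv.refl α)),
    Nat.card_congr (Equiv.sigmaEquivProd _ _), Nat.card_prod, Nat.card_prod]
  ring

theorem card_isTree [Finite α] [Nonempty α] :
    Nat.card {G : SimpleGraph α // G.IsTree} = Nat.card α ^ (Nat.card α - 2) := by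
  have hn : 0 < Nat.card α := Nat.card_pos
  refine Nat.eq_of_mul_eq_mul_right (pow_pos hn 2) (card_isTree_mul_sq.trans ?_)
  rcases Nat.lt_or_ge (Nat.card α) 2 with h | h
  · simp [show Nat.card α = 1 by omega]
  · rw [← pow_add, Nat.sub_add_cancel h]

end SimpleGraph

/-- Cayley's formula: the number of labelled (unrooted) trees on vertex set
`{1,…,n}` (modelled as `Fin n`) is `n ^ (n-2)`. -/
theorem stmt1 (n : ℕ) (hn : 1 ≤ n) :
    Nat.card {G : SimpleGraph (Fin n) // G.IsTree} = n ^ (n - 2) := by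
  have : Nonempty (Fin n) := ⟨⟨0, hn⟩⟩
  simpa using SimpleGraph.card_isTree (α := Fin n)
end

section
/- For a rooted ordered tree T on n vertices with DFQ process (q_i)_{0≤i≤n}, the number of pairs (i,j) with 0 ≤ i ≤ n and 1 ≤ j < q_i equals the area a(T) = Σ_{i=1}^{n-1} (q_i - 1), and the number of graphs whose depth-first tree is T equals 2^{a(T)}. -/
/-- Let `(q_i)_{0 ≤ i ≤ n}` be the DFQ process of a rooted ordered tree on `n`
vertices (a discrete excursion: `q 0 = 1`, `q n = 0`, `q i > 0` for `i < n`, and each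
step decreases by at most one).  Then the number of pairs `(i,j)` with `0 ≤ i ≤ n`
and `1 ≤ j < q i` equals the area `a(T) = ∑_{i=1}^{n-1} (q_i - 1)`, and the number of
graphs whose depth-first tree is `T` — one for each subset of this set of possible
surplus-edge positions — equals `2^{a(T)}`. -/
theorem stmt16 (n : ℕ) (q : ℕ → ℕ)
    (h0 : q 0 = 1) (hn : q n = 0)
    (hpos : ∀ i < n, 0 < q i)
    (hstep : ∀ i, q i ≤ q (i + 1) + 1) :
    Nat.card {p : ℕ × ℕ // p.1 ≤ n ∧ 1 ≤ p.2 ∧ p.2 < q p.1} =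
      ∑ i ∈ Finset.Ico 1 n, (q i - 1) ∧
    Nat.card (Set {p : ℕ × ℕ // p.1 ≤ n ∧ 1 ≤ p.2 ∧ p.2 < q p.1}) =
      2 ^ ∑ i ∈ Finset.Ico 1 n, (q i - 1) := by
  have hn1 : 1 ≤ n := by
    by_contra h
    have : n = 0 := by omega
    rw [this] at hn; omega
  -- the finset of surplus positions
  set S : Finset (ℕ × ℕ) := (Finset.range (n+1)).biUnion
    (fun i => (Finset.Ico 1 (q i)).image (fun j => (i, j))) with hS
  have hmem : ∀ p : ℕ × ℕ, p ∈ S ↔ (p.1 ≤ n ∧ 1 ≤ p.2 ∧ p.2 < q p.1) := by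
    rintro ⟨i, j⟩
    simp only [hS, Finset.mem_biUnion, Finset.mem_image, Finset.mem_range,
      Finset.mem_Ico, Nat.lt_succ_iff, Prod.mk.injEq]
    constructor
    · rintro ⟨i', hi', j', hj', rfl, rfl⟩
      exact ⟨hi', hj'.1, hj'.2⟩
    · rintro ⟨h1, h2, h3⟩
      exact ⟨i, h1, j, ⟨h2, h3⟩, rfl, rfl⟩
  have hScard : S.card = ∑ i ∈ Finset.Ico 1 n, (q i - 1) := by
    rw [hS, Finset.card_biUnion]
    · have h1 : ∀ i, ((Finset.Ico 1 (q i)).image (fun j => (i, j))).card = q i - 1 := by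
        intro i
        rw [Finset.card_image_of_injective _ (fun a b h => (Prod.mk.injEq _ _ _ _ ▸ h).2),
          Nat.card_Ico]
      simp only [h1]
      have hsplit : Finset.range (n+1) = insert 0 (insert n (Finset.Ico 1 n)) := by
        ext x
        simp only [Finset.mem_range, Finset.mem_insert, Finset.mem_Ico]
        omega
      rw [hsplit, Finset.sum_insert, Finset.sum_insert]
      · rw [h0, hn]; simp
      · simp
      · simp only [Finset.mem_insert, Finset.mem_Ico]; omega
    · intro a ha b hb hab
      apply Finset.disjoint_left.2
      rintro ⟨i, j⟩ hi hj
      simp only [Finset.mem_image, Finset.mem_Ico, Prod.mk.injEq] at hi hj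
      obtain ⟨_, _, rfl, _⟩ := hi
      obtain ⟨_, _, rfl, _⟩ := hj
      exact hab rfl
  have e : {p : ℕ × ℕ // p.1 ≤ n ∧ 1 ≤ p.2 ∧ p.2 < q p.1} ≃ {p // p ∈ S} :=
    Equiv.subtypeEquivRight (fun p => (hmem p).symm)
  haveI : Fintype {p : ℕ × ℕ // p.1 ≤ n ∧ 1 ≤ p.2 ∧ p.2 < q p.1} :=
    Fintype.ofEquiv _ e.symm
  have hcard : Nat.card {p : ℕ × ℕ // p.1 ≤ n ∧ 1 ≤ p.2 ∧ p.2 < q p.1} =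
      ∑ i ∈ Finset.Ico 1 n, (q i - 1) := by
    rw [Nat.card_eq_fintype_card, Fintype.card_congr e, Fintype.card_coe, hScard]
  refine ⟨hcard, ?_⟩
  rw [Nat.card_eq_fintype_card, Fintype.card_set, ← Nat.card_eq_fintype_card, hcard]
end
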